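/- Let $f : \mathbb{R}^3 \to [0,\infty)$ be measurable with $\|f\|_{L^\infty} \le M$, $\int_{\mathbb{R}^3} f\,dv \le m_0$ and $\int_{\mathbb{R}^3} f(v)(1+|v|^2)\,dv \le m_2$. Then there is a constant $C$, depending only on $M, m_0, m_2$, such that for every $v \ne 0$, $\int_{\mathbb{R}^3} f(v_1)|v - v_1|^{-1}\,dv_1 \le C |v|^{-1}$. -/

import Mathlib

/-!
Fix `v`, put `n = ‖v‖`, and bound the integrand pointwise by one of three terms. Where
`‖x‖ < n / 2` the kernel is at most `2 / n`, and the mass of `f` pays. On the ball of radius `r`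
around `v`, the bound `f ≤ M` leaves `M ∫_{‖y‖<r} ‖y‖⁻¹ = M r^(d-1) ∫_{‖y‖<1} ‖y‖⁻¹` by
homogeneity, which is `O(1/n)` because `r ≤ min 1 (4 / n)` and `d ≥ 2`. Elsewhere the kernel is at
most `1 / r ≤ (1 + ‖x‖²) / n`, and the second moment pays.
-/

open MeasureTheory Metric Module

/-- Chosen so that `1 / r = (1 + (n / 2)²) / n`, the factor that the weight `1 + ‖x‖²` supplies on
`‖x‖ ≥ n / 2`. -/
noncomputable def coulombSplitRadius (n : ℝ) : ℝ := n / (1 + (n / 2) ^ 2)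

lemma coulombSplitRadius_pos {n : ℝ} (hn : 0 < n) : 0 < coulombSplitRadius n := by
  unfold coulombSplitRadius; positivity

lemma coulombSplitRadius_pow_le {n : ℝ} (hn : 0 < n) {k : ℕ} (hk : 1 ≤ k) :
    coulombSplitRadius n ^ k ≤ 4 * n⁻¹ := by
  have hr := coulombSplitRadius_pos hn
  have hr1 : coulombSplitRadius n ≤ 1 := by
    rw [coulombSplitRadius, div_le_one (by positivity)]
    nlinarith [sq_nonneg (n / 2 - 1)]
  calc coulombSplitRadius n ^ k ≤ coulombSplitRadius n := pow_le_of_le_one hr.le hr1 (by omega)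
    _ ≤ n / (n / 2) ^ 2 := div_le_div_of_nonneg_left hn.le (by positivity) (by linarith)
    _ = 4 * n⁻¹ := by field_simp; ring

section Pointwise

variable {E : Type*} [NormedAddCommGroup E]

lemma norm_sub_inv_le_of_norm_lt_half {v x : E} (hx : ‖x‖ < ‖v‖ / 2) :
    ‖v - x‖⁻¹ ≤ 2 * ‖v‖⁻¹ := by
  have hv : 0 < ‖v‖ := by linarith [norm_nonneg x]
  calc ‖v - x‖⁻¹ ≤ (‖v‖ / 2)⁻¹ :=
        inv_anti₀ (by positivity) (by linarith [norm_sub_norm_le v x])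
    _ = 2 * ‖v‖⁻¹ := by field_simp

lemma norm_sub_inv_le_of_half_le_norm {v x : E} (hv : v ≠ 0) (hx : ‖v‖ / 2 ≤ ‖x‖)
    (hvx : coulombSplitRadius ‖v‖ ≤ ‖v - x‖) : ‖v - x‖⁻¹ ≤ (1 + ‖x‖ ^ 2) * ‖v‖⁻¹ := by
  have hn : 0 < ‖v‖ := norm_pos_iff.2 hv
  calc ‖v - x‖⁻¹ ≤ (coulombSplitRadius ‖v‖)⁻¹ := inv_anti₀ (coulombSplitRadius_pos hn) hvx
    _ = (1 + (‖v‖ / 2) ^ 2) * ‖v‖⁻¹ := by rw [coulombSplitRadius, inv_div, div_eq_mul_inv]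
    _ ≤ (1 + ‖x‖ ^ 2) * ‖v‖⁻¹ := by gcongr

lemma ofReal_mul_norm_sub_inv_le {a M : ℝ} (ha : 0 ≤ a) (haM : a ≤ M) {v : E} (hv : v ≠ 0)
    (x : E) :
    ENNReal.ofReal (a * ‖v - x‖⁻¹) ≤
      ENNReal.ofReal ‖v‖⁻¹ * (2 * ENNReal.ofReal a) +
      ENNReal.ofReal M *
        (ball 0 (coulombSplitRadius ‖v‖)).indicator (fun y => ENNReal.ofReal ‖y‖⁻¹) (v - x) +
      ENNReal.ofReal ‖v‖⁻¹ * ENNReal.ofReal (a * (1 + ‖x‖ ^ 2)) := by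
  by_cases hnear : ‖x‖ < ‖v‖ / 2
  · refine le_add_right (le_add_right ?_)
    have hle : a * ‖v - x‖⁻¹ ≤ ‖v‖⁻¹ * (2 * a) := by
      nlinarith [norm_sub_inv_le_of_norm_lt_half hnear]
    calc ENNReal.ofReal (a * ‖v - x‖⁻¹) ≤ ENNReal.ofReal (‖v‖⁻¹ * (2 * a)) :=
          ENNReal.ofReal_le_ofReal hle
      _ = _ := by rw [ENNReal.ofReal_mul (by positivity), ENNReal.ofReal_mul zero_le_two]; simp
  by_cases hball : ‖v - x‖ < coulombSplitRadius ‖v‖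
  · refine le_add_right (le_add_left ?_)
    rw [Set.indicator_of_mem (by simpa using hball), ← ENNReal.ofReal_mul (ha.trans haM)]
    gcongr
  · refine le_add_left ?_
    rw [← ENNReal.ofReal_mul (by positivity)]
    refine ENNReal.ofReal_le_ofReal ?_
    calc a * ‖v - x‖⁻¹ ≤ a * ((1 + ‖x‖ ^ 2) * ‖v‖⁻¹) := by
          gcongr; exact norm_sub_inv_le_of_half_le_norm hv (not_lt.1 hnear) (not_lt.1 hball)
      _ = ‖v‖⁻¹ * (a * (1 + ‖x‖ ^ 2)) := by ring

end Pointwise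

section CoulombKernel

variable {E : Type*} [NormedAddCommGroup E] [NormedSpace ℝ E] [FiniteDimensional ℝ E]
  [MeasurableSpace E] [BorelSpace E] (μ : Measure E) [μ.IsAddHaarMeasure]

lemma integrableOn_ball_norm_inv (hd : 2 ≤ finrank ℝ E) (r : ℝ) :
    IntegrableOn (fun x : E => ‖x‖⁻¹) (ball 0 r) μ := by
  refine integrableOn_ball_of_norm_le_rpow (C := 1) (α := 1) (by omega) (by norm_cast)
    (.of_forall fun x => ?_) (by fun_prop)
  simp [Real.rpow_neg_one]

lemma setIntegral_ball_norm_inv (hd : 1 ≤ finrank ℝ E) {r : ℝ} (hr : 0 < r) :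
    ∫ x in ball 0 r, ‖x‖⁻¹ ∂μ = r ^ (finrank ℝ E - 1) * ∫ x in ball 0 1, ‖x‖⁻¹ ∂μ := by
  have hscale := Measure.setIntegral_comp_smul_of_pos μ (fun x : E => ‖x‖⁻¹) (ball 0 1) hr
  simp only [smul_unitBall_of_pos hr, norm_smul, Real.norm_of_nonneg hr.le, mul_inv,
    integral_const_mul, smul_eq_mul] at hscale
  have hpow : r ^ finrank ℝ E = r ^ (finrank ℝ E - 1) * r := by
    rw [← pow_succ, Nat.sub_add_cancel hd]
  rw [hpow, mul_inv, mul_comm _ r⁻¹, mul_assoc] at hscale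
  rw [mul_left_cancel₀ (inv_ne_zero hr.ne') hscale, mul_inv_cancel_left₀ (by positivity)]

lemma lintegral_ball_norm_inv (hd : 2 ≤ finrank ℝ E) {r : ℝ} (hr : 0 < r) :
    ∫⁻ x in ball 0 r, ENNReal.ofReal ‖x‖⁻¹ ∂μ =
      ENNReal.ofReal (r ^ (finrank ℝ E - 1) * ∫ x in ball 0 1, ‖x‖⁻¹ ∂μ) := by
  rw [← setIntegral_ball_norm_inv μ (by omega) hr, ofReal_integral_eq_lintegral_ofReal
    (integrableOn_ball_norm_inv μ hd r) (.of_forall fun x => by positivity)]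

theorem lintegral_mul_norm_sub_inv_le (hd : 2 ≤ finrank ℝ E) {f : E → ℝ} {M : ℝ}
    (hf : Measurable f) (hf0 : ∀ x, 0 ≤ f x) (hfM : ∀ x, f x ≤ M) {v : E} (hv : v ≠ 0) :
    ∫⁻ x, ENNReal.ofReal (f x * ‖v - x‖⁻¹) ∂μ ≤
      ENNReal.ofReal ‖v‖⁻¹ * (2 * ∫⁻ x, ENNReal.ofReal (f x) ∂μ +
        4 * ENNReal.ofReal (M * ∫ x in ball 0 1, ‖x‖⁻¹ ∂μ) +
        ∫⁻ x, ENNReal.ofReal (f x * (1 + ‖x‖ ^ 2)) ∂μ) := by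
  have hn : 0 < ‖v‖ := norm_pos_iff.2 hv
  have hM : 0 ≤ M := (hf0 0).trans (hfM 0)
  have hK : 0 ≤ ∫ x in ball (0 : E) 1, ‖x‖⁻¹ ∂μ := setIntegral_nonneg measurableSet_ball
    fun x _ => by positivity
  set r := coulombSplitRadius ‖v‖
  have hind : Measurable fun x => (ball 0 r).indicator (fun y => ENNReal.ofReal ‖y‖⁻¹) (v - x) :=
    ((by fun_prop : Measurable fun y : E => ENNReal.ofReal ‖y‖⁻¹).indicator
      measurableSet_ball).comp (by fun_prop)
  have hnear : ∫⁻ x, (ball 0 r).indicator (fun y => ENNReal.ofReal ‖y‖⁻¹) (v - x) ∂μ ≤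
      ENNReal.ofReal ‖v‖⁻¹ * (4 * ENNReal.ofReal (∫ x in ball (0 : E) 1, ‖x‖⁻¹ ∂μ)) := by
    rw [lintegral_sub_left_eq_self, lintegral_indicator measurableSet_ball,
      lintegral_ball_norm_inv μ hd (coulombSplitRadius_pos hn), ← ENNReal.ofReal_ofNat 4,
      ← ENNReal.ofReal_mul zero_le_four, ← ENNReal.ofReal_mul (by positivity), ← mul_assoc,
      mul_comm ‖v‖⁻¹]
    exact ENNReal.ofReal_le_ofReal
      (mul_le_mul_of_nonneg_right (coulombSplitRadius_pow_le hn (by omega)) hK)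
  calc ∫⁻ x, ENNReal.ofReal (f x * ‖v - x‖⁻¹) ∂μ
      ≤ ∫⁻ x, ENNReal.ofReal ‖v‖⁻¹ * (2 * ENNReal.ofReal (f x)) +
          ENNReal.ofReal M * (ball 0 r).indicator (fun y => ENNReal.ofReal ‖y‖⁻¹) (v - x) +
          ENNReal.ofReal ‖v‖⁻¹ * ENNReal.ofReal (f x * (1 + ‖x‖ ^ 2)) ∂μ :=
        lintegral_mono fun x => ofReal_mul_norm_sub_inv_le (hf0 x) (hfM x) hv x
    _ = ENNReal.ofReal ‖v‖⁻¹ * (2 * ∫⁻ x, ENNReal.ofReal (f x) ∂μ) +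
          ENNReal.ofReal M * ∫⁻ x, (ball 0 r).indicator (fun y => ENNReal.ofReal ‖y‖⁻¹) (v - x) ∂μ +
          ENNReal.ofReal ‖v‖⁻¹ * ∫⁻ x, ENNReal.ofReal (f x * (1 + ‖x‖ ^ 2)) ∂μ := by
        rw [lintegral_add_left (by fun_prop), lintegral_add_left (by fun_prop),
          lintegral_const_mul' _ _ ENNReal.ofReal_ne_top, lintegral_const_mul _ (by fun_prop),
          lintegral_const_mul _ hind, lintegral_const_mul _ (by fun_prop)]
    _ ≤ ENNReal.ofReal ‖v‖⁻¹ * (2 * ∫⁻ x, ENNReal.ofReal (f x) ∂μ) +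
          ENNReal.ofReal M * (ENNReal.ofReal ‖v‖⁻¹ *
            (4 * ENNReal.ofReal (∫ x in ball (0 : E) 1, ‖x‖⁻¹ ∂μ))) +
          ENNReal.ofReal ‖v‖⁻¹ * ∫⁻ x, ENNReal.ofReal (f x * (1 + ‖x‖ ^ 2)) ∂μ := by
        gcongr
    _ = _ := by
        rw [ENNReal.ofReal_mul hM]
        ring

end CoulombKernel

lemma lintegral_ofReal_le_of_integral_le {α : Type*} [MeasurableSpace α] {μ : Measure α}
    {f : α → ℝ} {m : ℝ} (hfi : Integrable f μ) (hf0 : 0 ≤ᵐ[μ] f) (hm : ∫ x, f x ∂μ ≤ m) :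
    ∫⁻ x, ENNReal.ofReal (f x) ∂μ ≤ ENNReal.ofReal m := by
  rw [← ofReal_integral_eq_lintegral_ofReal hfi hf0]
  exact ENNReal.ofReal_le_ofReal hm

/-- Decay estimate for the Coulomb-kernel convolution, with constant depending only
on the `L^∞` bound, the mass and the second moment. -/
theorem stmt9 (M m0 m2 : ℝ) (hM : 0 < M) (hm0 : 0 < m0) (hm2 : 0 < m2) :
    ∃ C : ℝ, 0 < C ∧ ∀ f : EuclideanSpace ℝ (Fin 3) → ℝ,
      Measurable f → (∀ v, 0 ≤ f v) → (∀ v, f v ≤ M) →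
      Integrable f → (∫ v, f v) ≤ m0 →
      Integrable (fun v => f v * (1 + ‖v‖ ^ 2)) →
      (∫ v, f v * (1 + ‖v‖ ^ 2)) ≤ m2 →
      ∀ v : EuclideanSpace ℝ (Fin 3), v ≠ 0 →
        ∫⁻ v1, ENNReal.ofReal (f v1 * ‖v - v1‖⁻¹) ≤
          ENNReal.ofReal (C * ‖v‖⁻¹) := by
  set K := ∫ x in ball (0 : EuclideanSpace ℝ (Fin 3)) 1, ‖x‖⁻¹
  have hK : 0 ≤ K := setIntegral_nonneg measurableSet_ball fun x _ => by positivity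
  refine ⟨2 * m0 + 4 * (M * K) + m2, by positivity, ?_⟩
  intro f hf hf0 hfM hfi hfm0 hfi2 hfm2 v hv
  have hmass := lintegral_ofReal_le_of_integral_le hfi (.of_forall hf0) hfm0
  have hmoment := lintegral_ofReal_le_of_integral_le hfi2
    (.of_forall fun x => mul_nonneg (hf0 x) (by positivity)) hfm2
  calc ∫⁻ v1, ENNReal.ofReal (f v1 * ‖v - v1‖⁻¹)
      ≤ ENNReal.ofReal ‖v‖⁻¹ * (2 * ENNReal.ofReal m0 + 4 * ENNReal.ofReal (M * K) +
          ENNReal.ofReal m2) := by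
        grw [lintegral_mul_norm_sub_inv_le volume (by simp) hf hf0 hfM hv, hmass, hmoment]
    _ = ENNReal.ofReal ((2 * m0 + 4 * (M * K) + m2) * ‖v‖⁻¹) := by
        rw [mul_comm _ ‖v‖⁻¹, ENNReal.ofReal_mul (inv_nonneg.2 (norm_nonneg v)),
          ENNReal.ofReal_add (by positivity) hm2.le,
          ENNReal.ofReal_add (by positivity) (by positivity),
          ENNReal.ofReal_mul zero_le_two, ENNReal.ofReal_mul zero_le_four]
        simp
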